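/- For all z in the upper half-plane ℍ: (1/(δ·|z|²))·I1(z, z̄)·I2(z, z̄) < 1. Consequently, |m1(z)|²·I1(z, z̄) < 1/δ, |m2(z)|²·I2(z, z̄) < δ, and |z·m(z) + 1| ≤ √δ. -/

import Mathlib

open MeasureTheory ProbabilityTheory Filter Topology
open scoped ENNReal NNReal

noncomputable section

namespace SpecGLM

/-- The (topological) support of a measure on `ℝ`. -/
def msupport (μ : Measure ℝ) : Set ℝ := {x | ∀ U ∈ nhds x, μ U ≠ 0}

/-- `k`-th largest eigenvalue (1-indexed) of a real symmetric matrix; junk value `0`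
if the matrix is not symmetric. -/
def lambdaK {d : ℕ} (A : Matrix (Fin d) (Fin d) ℝ) (k : ℕ) : ℝ := by
  classical
  exact if hA : A.IsHermitian then
    (((List.ofFn hA.eigenvalues).insertionSort (· ≥ ·)).getD (k - 1) 0)
  else 0

/-- Empirical distribution of a finite family of real numbers. -/
def esdVec {n : ℕ} (v : Fin n → ℝ) : Measure ℝ :=
  (n : ℝ≥0∞)⁻¹ • ∑ i, Measure.dirac (v i)

/-- Empirical spectral distribution of a real symmetric matrix. -/
def esd {d : ℕ} (A : Matrix (Fin d) (Fin d) ℝ) : Measure ℝ := by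
  classical
  exact if hA : A.IsHermitian then esdVec hA.eigenvalues else 0

/-- Weak convergence of a sequence of measures on `ℝ`. -/
def WeakTendsto (ν : ℕ → Measure ℝ) (ν' : Measure ℝ) : Prop :=
  ∀ f : BoundedContinuousFunction ℝ ℝ,
    Tendsto (fun k => ∫ x, f x ∂(ν k)) atTop (𝓝 (∫ x, f x ∂ν'))

/-- Convergence in probability of a sequence of real random variables to a constant. -/
def TendstoInProbability {Ω : Type*} [MeasurableSpace Ω] (μ : Measure Ω)
    (X : ℕ → Ω → ℝ) (c : ℝ) : Prop :=
  ∀ ε : ℝ, 0 < ε → Tendsto (fun k => μ {ω | ε ≤ |X k ω - c|}) atTop (𝓝 0)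

/-- Almost sure convergence of a sequence of real random variables to a constant. -/
def TendstoAlmostSurely {Ω : Type*} [MeasurableSpace Ω] (μ : Measure Ω)
    (X : ℕ → Ω → ℝ) (c : ℝ) : Prop :=
  ∀ᵐ ω ∂μ, Tendsto (fun k => X k ω) atTop (𝓝 c)

/-- Pseudo-Lipschitz functions of finite order. -/
def PseudoLipschitz (f : ℝ → ℝ) : Prop :=
  ∃ (j : ℕ) (L : ℝ), ∀ x y : ℝ,
    |f x - f y| ≤ L * |x - y| * (1 + |x| ^ (j - 1) + |y| ^ (j - 1))

/-- A finite family of real random variables is i.i.d. with common law `ν`. -/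
def IIDLaw {Ω : Type*} [MeasurableSpace Ω] (μ : Measure Ω) {ι : Type*} [Fintype ι]
    (f : ι → Ω → ℝ) (ν : Measure ℝ) : Prop :=
  (∀ i, Measurable (f i)) ∧ (∀ i, Measure.map (f i) μ = ν) ∧
    iIndepFun f μ

/-- The positive semidefinite square root of a matrix (junk value `0` if not psd). -/
def sqrtMat {d : ℕ} (A : Matrix (Fin d) (Fin d) ℝ) : Matrix (Fin d) (Fin d) ℝ := by
  classical
  exact if hA : A.PosSemidef then
    (hA.1.eigenvectorUnitary : Matrix (Fin d) (Fin d) ℝ) *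
      Matrix.diagonal ((↑) ∘ Real.sqrt ∘ hA.1.eigenvalues) *
      (star hA.1.eigenvectorUnitary : Matrix (Fin d) (Fin d) ℝ)
  else 0

/-- Euclidean norm of a vector. -/
def vnorm {d : ℕ} (v : Fin d → ℝ) : ℝ := Real.sqrt (∑ i, v i ^ 2)

/-- Euclidean inner product. -/
def dot {d : ℕ} (u v : Fin d → ℝ) : ℝ := ∑ i, u i * v i

/-- A probability space bundled as a structure. -/
structure ProbSpace where
  carrier : Type
  inst : MeasurableSpace carrier
  meas : @Measure carrier inst
  prob : @IsProbabilityMeasure carrier inst meas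

attribute [instance] ProbSpace.inst ProbSpace.prob

end SpecGLM
namespace SpecGLM

/-- The complex upper half-plane. -/
def UH : Set ℂ := {z | 0 < z.im}

/-- Meromorphy at a point: some power of `(· - z)` times `f` is analytic at `z`. -/
def MeroAt (f : ℂ → ℂ) (z : ℂ) : Prop :=
  ∃ k : ℕ, AnalyticAt ℂ (fun w => (w - z) ^ k * f w) z

/-- Data for the deterministic random-matrix system: aspect ratio and the limiting
spectral distributions `μ_T`, `μ_Σ`. -/
structure RMT where
  delta : ℝ
  muT : Measure ℝ
  muS : Measure ℝ

namespace RMT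

variable (R : RMT)

/-- `sup supp μ_T`. -/
def tauT : ℝ := sSup (msupport R.muT)

/-- `sup supp μ_Σ`. -/
def sSig : ℝ := sSup (msupport R.muS)

/-- `inf supp μ_Σ`. -/
def iSig : ℝ := sInf (msupport R.muS)

/-- `∫ s dμ_Σ(s)`. -/
def meanS : ℝ := ∫ s, s ∂(R.muS)

/-- `c(a) = ∫ t/(a - t) dμ_T(t)`. -/
def cfun (a : ℝ) : ℝ := ∫ t, t / (a - t) ∂(R.muT)

/-- The left end `s(a)` of the admissible interval for `γ(a)`. -/
def sfun (a : ℝ) : ℝ :=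
  if 0 < R.cfun a then R.cfun a * R.sSig
  else if R.cfun a < 0 then R.cfun a * R.iSig else 0

/-- `γ(a)` is the unique solution in `(s(a), ∞)` of
`1 = (1/δ) ∫ s/(γ(a) - c(a)s) dμ_Σ(s)`. -/
def IsGammaFun (γ : ℝ → ℝ) : Prop :=
  ∀ a, R.tauT < a →
    R.sfun a < γ a ∧ 1 = (1 / R.delta) * ∫ s, s / (γ a - R.cfun a * s) ∂(R.muS) ∧
      ∀ g, R.sfun a < g →
        1 = (1 / R.delta) * ∫ s, s / (g - R.cfun a * s) ∂(R.muS) → g = γ a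

/-- Basic assumptions on the data. -/
def Basic : Prop :=
  0 < R.delta ∧ IsProbabilityMeasure R.muT ∧ IsProbabilityMeasure R.muS ∧
    (∃ C : ℝ, msupport R.muT ⊆ Set.Icc (-C) C) ∧
    (∃ l u : ℝ, 0 < l ∧ msupport R.muS ⊆ Set.Icc l u) ∧
    R.muT ≠ Measure.dirac 0 ∧ R.muS ≠ Measure.dirac 0 ∧ 0 < R.tauT

/-- Thick-edge assumptions. -/
def ThickEdge : Prop :=
  Tendsto (fun a => ∫ t, t / (a - t) ∂(R.muT)) (𝓝[>] R.tauT) atTop ∧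
  Tendsto (fun a => ∫ t, t ^ 2 / (a - t) ^ 2 ∂(R.muT)) (𝓝[>] R.tauT) atTop ∧
  Tendsto (fun w => |∫ s, s / (s - w) ∂(R.muS)|) (𝓝[>] R.sSig) atTop ∧
  Tendsto (fun w => ∫ s, s ^ 2 / (s - w) ^ 2 ∂(R.muS)) (𝓝[>] R.sSig) atTop ∧
  Tendsto (fun w => ∫ s, s ^ 3 / (s - w) ^ 2 ∂(R.muS)) (𝓝[>] R.sSig) atTop ∧
  Tendsto (fun w => |∫ s, s / (s - w) ∂(R.muS)|) (𝓝[<] R.iSig) atTop ∧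
  Tendsto (fun w => ∫ s, s ^ 2 / (s - w) ^ 2 ∂(R.muS)) (𝓝[<] R.iSig) atTop ∧
  Tendsto (fun w => ∫ s, s ^ 3 / (s - w) ^ 2 ∂(R.muS)) (𝓝[<] R.iSig) atTop

/-- The system of equations satisfied by `(m(z), m₁(z), m₂(z))` at `z`. -/
def SystemEqAt (z w w1 w2 : ℂ) : Prop :=
  (-(z * w) = (1 - (R.delta : ℂ)) +
      (R.delta : ℂ) * ∫ t, (1 + w1 * (t : ℂ))⁻¹ ∂(R.muT)) ∧
  (-(z * w) = ∫ s, (1 + w2 * (s : ℂ))⁻¹ ∂(R.muS)) ∧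
  (-(z * w) = 1 + (R.delta : ℂ) * z * w1 * w2)

/-- `(m, m₁, m₂)` is the (unique) solution of the system, subject to
`m(z) ∈ ℍ`, `m₁(z) ∈ ℍ`, `z m₂(z) ∈ ℍ`. -/
def IsSystemSolution (m m1 m2 : ℂ → ℂ) : Prop :=
  ∀ z ∈ UH,
    m z ∈ UH ∧ m1 z ∈ UH ∧ z * m2 z ∈ UH ∧ R.SystemEqAt z (m z) (m1 z) (m2 z) ∧
    ∀ w w1 w2 : ℂ, w ∈ UH → w1 ∈ UH → z * w2 ∈ UH → R.SystemEqAt z w w1 w2 →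
      w = m z ∧ w1 = m1 z ∧ w2 = m2 z

/-- `I₁(z, z̄) = ∫ t²/|1 + m₁(z)t|² dμ_T(t)`. -/
def I1sq (m1 : ℂ → ℂ) (z : ℂ) : ℝ :=
  ∫ t, t ^ 2 / Complex.normSq (1 + m1 z * (t : ℂ)) ∂(R.muT)

/-- `I₂(z, z̄) = ∫ s²/|1 + m₂(z)s|² dμ_Σ(s)`. -/
def I2sq (m2 : ℂ → ℂ) (z : ℂ) : ℝ :=
  ∫ s, s ^ 2 / Complex.normSq (1 + m2 z * (s : ℂ)) ∂(R.muS)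

end RMT

/-- `m` is the Stieltjes transform of the measure `ν` on `ℝ`. -/
def IsStieltjesOf (ν : Measure ℝ) (m : ℂ → ℂ) : Prop :=
  ∀ z ∈ UH, m z = ∫ x, ((x : ℂ) - z)⁻¹ ∂ν

end SpecGLM

/-!
Put `G_T = ∫ t/(1 + m₁t) dμ_T` and `G_Σ = ∫ s/(1 + m₂s) dμ_Σ`. Since
`(1 + wx)⁻¹ = 1 - w · x/(1 + wx)`, the system says `G_T = -z m₂` and `G_Σ = -δ z m₁`.
The imaginary parts of `G_T` and of `z̄ G_Σ` give `Im(z m₂) = Im(m₁) I₁` and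
`Im z · J + Im(z m₂) I₂ = δ |z|² Im m₁` with `J = ∫ s/|1 + m₂s|² dμ_Σ > 0`, hence
`I₁ I₂ < δ |z|²`. Jensen's inequality `|G|² ≤ ∫ |x/(1 + wx)|²` turns the two values of `G`
into `|z|² |m₂|² ≤ I₁` and `δ² |z|² |m₁|² ≤ I₂`; the other bounds follow, using
`z m + 1 = -δ z m₁ m₂`.
-/

namespace SpecGLM

open Complex (normSq)
open ComplexConjugate

theorem integral_pos_of_ae_pos {α : Type*} [MeasurableSpace α] {μ : Measure α} [NeZero μ]
    {f : α → ℝ} (hf : ∀ᵐ x ∂μ, 0 < f x) (hfi : Integrable f μ) : 0 < ∫ x, f x ∂μ := by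
  have hsupp : Function.support f ∈ ae μ := hf.mono fun _ hx => hx.ne'
  rw [integral_pos_iff_support_of_nonneg_ae (hf.mono fun _ hx => hx.le) hfi,
    measure_congr (ae_eq_univ.2 hsupp)]
  exact Measure.measure_univ_pos.2 (NeZero.ne μ)

theorem integrable_of_continuousOn_of_ae_mem {X E : Type*} [TopologicalSpace X] [T2Space X]
    [MeasurableSpace X] [OpensMeasurableSpace X] [NormedAddCommGroup E] {μ : Measure X}
    [IsFiniteMeasureOnCompacts μ] {K : Set X} {f : X → E} (hK : IsCompact K)
    (hμK : ∀ᵐ x ∂μ, x ∈ K) (hf : ContinuousOn f K) : Integrable f μ := by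
  have hK' : IntegrableOn f K μ := hf.integrableOn_compact hK
  rwa [IntegrableOn, Measure.restrict_eq_self_of_ae_mem hμK] at hK'

theorem sq_norm_integral_le {α E : Type*} [MeasurableSpace α] [NormedAddCommGroup E]
    [NormedSpace ℝ E] [CompleteSpace E] {μ : Measure α} [IsProbabilityMeasure μ] {f : α → E}
    (hf : Integrable f μ) (hf2 : Integrable (fun x => ‖f x‖ ^ 2) μ) :
    ‖∫ x, f x ∂μ‖ ^ 2 ≤ ∫ x, ‖f x‖ ^ 2 ∂μ :=
  (convexOn_univ_norm.pow (fun _ _ => norm_nonneg _) 2).map_integral_le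
    (continuous_norm.pow 2).continuousOn isClosed_univ (ae_of_all _ fun _ => trivial) hf hf2

theorem msupport_eq_support (μ : Measure ℝ) : msupport μ = μ.support := by
  ext x
  simp [msupport, Measure.mem_support_iff_forall, pos_iff_ne_zero]

theorem ae_mem_of_msupport_subset {μ : Measure ℝ} {s : Set ℝ} (h : msupport μ ⊆ s) :
    ∀ᵐ x ∂μ, x ∈ s :=
  Filter.mem_of_superset Measure.support_mem_ae (msupport_eq_support μ ▸ h)

theorem one_add_mul_ofReal_ne_zero {w : ℂ} (hw : w.im ≠ 0) (x : ℝ) : 1 + w * x ≠ 0 := by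
  intro h
  have him : w.im * x = 0 := by simpa using congrArg Complex.im h
  rcases mul_eq_zero.1 him with hw0 | hx0
  · exact hw hw0
  · simp [hx0] at h

theorem one_add_mul_ofReal_ne_zero_of_im_pos {z w : ℂ} (hz : 0 < z.im) (hzw : 0 < (z * w).im)
    {x : ℝ} (hx : 0 ≤ x) : 1 + w * x ≠ 0 := by
  intro h
  have him : (z * (1 + w * x)).im = z.im + (z * w).im * x := by
    simp [mul_add, ← mul_assoc]
  rw [h, mul_zero, Complex.zero_im] at him
  nlinarith [mul_nonneg hzw.le hx]

theorem inv_one_add_mul_ofReal {w : ℂ} {x : ℝ} (h : 1 + w * x ≠ 0) :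
    (1 + w * x)⁻¹ = 1 - w * (x / (1 + w * x)) := by
  field_simp
  ring

theorem sq_norm_ofReal_div_one_add_mul (w : ℂ) (x : ℝ) :
    ‖(x : ℂ) / (1 + w * x)‖ ^ 2 = x ^ 2 / normSq (1 + w * x) := by
  rw [norm_div, div_pow, Complex.norm_real, Complex.sq_norm, Real.norm_eq_abs, sq_abs]

theorem im_ofReal_div_one_add_mul (w : ℂ) (x : ℝ) :
    ((x : ℂ) / (1 + w * x)).im = -w.im * (x ^ 2 / normSq (1 + w * x)) := by
  simp only [Complex.div_im, Complex.add_im, Complex.add_re, Complex.one_im, Complex.one_re,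
    Complex.mul_im, Complex.mul_re, Complex.ofReal_re, Complex.ofReal_im]
  ring

theorem im_conj_mul_ofReal_div_one_add_mul (z w : ℂ) (x : ℝ) :
    (conj z * (x / (1 + w * x))).im =
      -(z.im * (x / normSq (1 + w * x)) + (z * w).im * (x ^ 2 / normSq (1 + w * x))) := by
  rw [mul_div_assoc', Complex.div_im]
  simp only [Complex.add_im, Complex.add_re, Complex.one_im, Complex.one_re,
    Complex.mul_im, Complex.mul_re, Complex.ofReal_re, Complex.ofReal_im,
    Complex.conj_re, Complex.conj_im]
  ring

def ratioMean (μ : Measure ℝ) (w : ℂ) : ℂ := ∫ x, (x : ℂ) / (1 + w * x) ∂μ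

def ratioSqMean (μ : Measure ℝ) (w : ℂ) : ℝ := ∫ x, x ^ 2 / normSq (1 + w * x) ∂μ

def ratioWeight (μ : Measure ℝ) (w : ℂ) : ℝ := ∫ x, x / normSq (1 + w * x) ∂μ

theorem ratioSqMean_nonneg (μ : Measure ℝ) (w : ℂ) : 0 ≤ ratioSqMean μ w :=
  integral_nonneg fun _ => div_nonneg (sq_nonneg _) (Complex.normSq_nonneg _)

section CompactSupport

variable {μ : Measure ℝ} {K : Set ℝ} {w : ℂ}

theorem integrable_ofReal_div_one_add_mul [IsFiniteMeasure μ] (hK : IsCompact K)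
    (hμK : ∀ᵐ x ∂μ, x ∈ K) (hw : ∀ x ∈ K, 1 + w * x ≠ 0) :
    Integrable (fun x : ℝ => (x : ℂ) / (1 + w * x)) μ :=
  integrable_of_continuousOn_of_ae_mem hK hμK
    (Complex.continuous_ofReal.continuousOn.div (by fun_prop) hw)

theorem integrable_pow_div_normSq_one_add_mul [IsFiniteMeasure μ] (n : ℕ) (hK : IsCompact K)
    (hμK : ∀ᵐ x ∂μ, x ∈ K) (hw : ∀ x ∈ K, 1 + w * x ≠ 0) :
    Integrable (fun x : ℝ => x ^ n / normSq (1 + w * x)) μ :=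
  integrable_of_continuousOn_of_ae_mem hK hμK
    ((continuous_pow n).continuousOn.div (by fun_prop)
      fun x hx => (Complex.normSq_pos.2 (hw x hx)).ne')

theorem integral_inv_one_add_mul [IsProbabilityMeasure μ] (hK : IsCompact K)
    (hμK : ∀ᵐ x ∂μ, x ∈ K) (hw : ∀ x ∈ K, 1 + w * x ≠ 0) :
    ∫ x, (1 + w * x)⁻¹ ∂μ = 1 - w * ratioMean μ w := by
  rw [integral_congr_ae (hμK.mono fun x hx => inv_one_add_mul_ofReal (hw x hx)),
    integral_sub (integrable_const 1)
      ((integrable_ofReal_div_one_add_mul hK hμK hw).const_mul w),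
    integral_const_mul]
  simp [ratioMean]

theorem im_ratioMean [IsFiniteMeasure μ] (hK : IsCompact K) (hμK : ∀ᵐ x ∂μ, x ∈ K)
    (hw : ∀ x ∈ K, 1 + w * x ≠ 0) : (ratioMean μ w).im = -w.im * ratioSqMean μ w := by
  have him := integral_im (integrable_ofReal_div_one_add_mul hK hμK hw)
  simp only [RCLike.im_to_complex] at him
  rw [ratioMean, ← him, ratioSqMean, ← integral_const_mul]
  exact integral_congr_ae (ae_of_all _ (im_ofReal_div_one_add_mul w))

theorem im_conj_mul_ratioMean [IsFiniteMeasure μ] (z : ℂ) (hK : IsCompact K)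
    (hμK : ∀ᵐ x ∂μ, x ∈ K) (hw : ∀ x ∈ K, 1 + w * x ≠ 0) :
    (conj z * ratioMean μ w).im = -(z.im * ratioWeight μ w + (z * w).im * ratioSqMean μ w) := by
  have hweight : Integrable (fun x : ℝ => x / normSq (1 + w * x)) μ := by
    simpa using integrable_pow_div_normSq_one_add_mul 1 hK hμK hw
  have him := integral_im ((integrable_ofReal_div_one_add_mul hK hμK hw).const_mul (conj z))
  simp only [RCLike.im_to_complex] at him
  rw [ratioMean, ← integral_const_mul, ← him, ratioWeight, ratioSqMean, ← integral_const_mul,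
    ← integral_const_mul, ← integral_add, ← integral_neg]
  · exact integral_congr_ae (ae_of_all _ (im_conj_mul_ofReal_div_one_add_mul z w))
  · exact hweight.const_mul _
  · exact (integrable_pow_div_normSq_one_add_mul 2 hK hμK hw).const_mul _

theorem normSq_ratioMean_le [IsProbabilityMeasure μ] (hK : IsCompact K)
    (hμK : ∀ᵐ x ∂μ, x ∈ K) (hw : ∀ x ∈ K, 1 + w * x ≠ 0) :
    normSq (ratioMean μ w) ≤ ratioSqMean μ w := by
  have hsq := integrable_pow_div_normSq_one_add_mul 2 hK hμK hw
  simp_rw [← sq_norm_ofReal_div_one_add_mul] at hsq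
  calc normSq (ratioMean μ w) = ‖ratioMean μ w‖ ^ 2 := (Complex.sq_norm _).symm
    _ ≤ ∫ x, ‖(x : ℂ) / (1 + w * x)‖ ^ 2 ∂μ :=
      sq_norm_integral_le (integrable_ofReal_div_one_add_mul hK hμK hw) hsq
    _ = ratioSqMean μ w := by simp_rw [sq_norm_ofReal_div_one_add_mul]; rfl

theorem ratioWeight_pos [IsProbabilityMeasure μ] (hK : IsCompact K) (hμK : ∀ᵐ x ∂μ, x ∈ K)
    (hKpos : ∀ x ∈ K, 0 < x) (hw : ∀ x ∈ K, 1 + w * x ≠ 0) : 0 < ratioWeight μ w := by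
  refine integral_pos_of_ae_pos (hμK.mono fun x hx => ?_)
    (by simpa using integrable_pow_div_normSq_one_add_mul 1 hK hμK hw)
  exact div_pos (hKpos x hx) (Complex.normSq_pos.2 (hw x hx))

end CompactSupport

namespace RMT

variable {R : RMT} {z w w1 w2 : ℂ}

theorem SystemEqAt.ratioMean_muT (h : R.SystemEqAt z w w1 w2) [IsProbabilityMeasure R.muT]
    (hδ : R.delta ≠ 0) (hw1 : w1 ≠ 0) {K : Set ℝ} (hK : IsCompact K)
    (hμK : ∀ᵐ t ∂(R.muT), t ∈ K) (hw : ∀ t ∈ K, 1 + w1 * t ≠ 0) :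
    ratioMean R.muT w1 = -(z * w2) := by
  obtain ⟨e1, -, e3⟩ := h
  rw [integral_inv_one_add_mul hK hμK hw] at e1
  refine mul_left_cancel₀ (mul_ne_zero (Complex.ofReal_ne_zero.2 hδ) hw1) ?_
  linear_combination e1 - e3

theorem SystemEqAt.ratioMean_muS (h : R.SystemEqAt z w w1 w2) [IsProbabilityMeasure R.muS]
    (hw2 : w2 ≠ 0) {K : Set ℝ} (hK : IsCompact K) (hμK : ∀ᵐ s ∂(R.muS), s ∈ K)
    (hw : ∀ s ∈ K, 1 + w2 * s ≠ 0) : ratioMean R.muS w2 = -(R.delta * z * w1) := by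
  obtain ⟨-, e2, e3⟩ := h
  rw [integral_inv_one_add_mul hK hμK hw] at e2
  refine mul_left_cancel₀ hw2 ?_
  linear_combination e2 - e3

theorem SystemEqAt.ratioSqMean_bounds (h : R.SystemEqAt z w w1 w2) (hδ : 0 < R.delta)
    [IsProbabilityMeasure R.muT] [IsProbabilityMeasure R.muS] {KT KS : Set ℝ}
    (hKT : IsCompact KT) (hT : ∀ᵐ t ∂(R.muT), t ∈ KT) (hKS : IsCompact KS)
    (hS : ∀ᵐ s ∂(R.muS), s ∈ KS) (hKSpos : ∀ s ∈ KS, 0 < s)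
    (hz : 0 < z.im) (hw1 : 0 < w1.im) (hw2 : 0 < (z * w2).im) :
    ratioSqMean R.muT w1 * ratioSqMean R.muS w2 < R.delta * normSq z ∧
      normSq z * normSq w2 ≤ ratioSqMean R.muT w1 ∧
      R.delta ^ 2 * normSq z * normSq w1 ≤ ratioSqMean R.muS w2 := by
  have hwT : ∀ t ∈ KT, 1 + w1 * t ≠ 0 := fun t _ => one_add_mul_ofReal_ne_zero hw1.ne' t
  have hwS : ∀ s ∈ KS, 1 + w2 * s ≠ 0 := fun s hs =>
    one_add_mul_ofReal_ne_zero_of_im_pos hz hw2 (hKSpos s hs).le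
  have hGT := h.ratioMean_muT hδ.ne' (by rintro rfl; simp at hw1) hKT hT hwT
  have hGS := h.ratioMean_muS (by rintro rfl; simp at hw2) hKS hS hwS
  have hImT : (z * w2).im = w1.im * ratioSqMean R.muT w1 := by
    have him := im_ratioMean hKT hT hwT
    rw [hGT, Complex.neg_im] at him
    linarith
  have hImS : z.im * ratioWeight R.muS w2 + (z * w2).im * ratioSqMean R.muS w2 =
      R.delta * normSq z * w1.im := by
    have him := im_conj_mul_ratioMean z hKS hS hwS
    have hconj : (conj z * -(R.delta * z * w1)).im = -(R.delta * normSq z * w1.im) := by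
      rw [show conj z * -(R.delta * z * w1) = -(R.delta * normSq z * w1) by
        rw [← Complex.mul_conj]; ring]
      simp
    rw [hGS, hconj] at him
    linarith
  have hJ := ratioWeight_pos hKS hS hKSpos hwS
  refine ⟨?_, by simpa [hGT] using normSq_ratioMean_le hKT hT hwT, ?_⟩
  · rw [hImT] at hImS
    refine lt_of_mul_lt_mul_left ?_ hw1.le
    nlinarith [mul_pos hz hJ]
  · simpa [hGS, Complex.normSq_mul, pow_two, mul_assoc] using normSq_ratioMean_le hKS hS hwS

end RMT

/-- **Lemma (stability bound).** For all `z` in the upper half-plane,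
`(1/(δ|z|²)) I₁(z,z̄) I₂(z,z̄) < 1`; consequently `|m₁(z)|² I₁(z,z̄) < 1/δ`,
`|m₂(z)|² I₂(z,z̄) < δ`, and `|z m(z) + 1| ≤ √δ`. -/
theorem stability_bound
    (R : RMT) (hB : R.Basic)
    (m m1 m2 : ℂ → ℂ) (hsol : R.IsSystemSolution m m1 m2) :
    ∀ z ∈ UH,
      (1 / (R.delta * Complex.normSq z)) * R.I1sq m1 z * R.I2sq m2 z < 1 ∧
      Complex.normSq (m1 z) * R.I1sq m1 z < 1 / R.delta ∧
      Complex.normSq (m2 z) * R.I2sq m2 z < R.delta ∧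
      ‖z * m z + 1‖ ≤ Real.sqrt R.delta := by
  intro z hz
  obtain ⟨hδ, hT, hS, ⟨C, hTC⟩, ⟨l, u, hl, hSlu⟩, -⟩ := hB
  obtain ⟨-, hm1, hm2, hsys, -⟩ := hsol z hz
  obtain ⟨hmain, hT_bound, hS_bound⟩ := hsys.ratioSqMean_bounds hδ isCompact_Icc
    (ae_mem_of_msupport_subset hTC) isCompact_Icc (ae_mem_of_msupport_subset hSlu)
    (fun s hs => hl.trans_le hs.1) hz hm1 hm2
  have hN : 0 < normSq z := Complex.normSq_pos.2 (by rintro rfl; simp [UH] at hz)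
  have hI1 := ratioSqMean_nonneg R.muT (m1 z)
  have hI2 := ratioSqMean_nonneg R.muS (m2 z)
  rw [show R.I1sq m1 z = ratioSqMean R.muT (m1 z) from rfl,
    show R.I2sq m2 z = ratioSqMean R.muS (m2 z) from rfl]
  have hm2_bound : normSq (m2 z) * ratioSqMean R.muS (m2 z) < R.delta := by
    nlinarith [mul_le_mul_of_nonneg_right hT_bound hI2]
  refine ⟨?_, ?_, hm2_bound, ?_⟩
  · rwa [mul_assoc, one_div_mul_eq_div, div_lt_one (mul_pos hδ hN)]
  · rw [lt_div_iff₀ hδ]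
    refine lt_of_mul_lt_mul_left ?_ (mul_pos hδ hN).le
    nlinarith [mul_le_mul_of_nonneg_right hS_bound hI1]
  · have hzm : z * m z + 1 = -(R.delta * z * m1 z * m2 z) := by
      linear_combination -hsys.2.2
    rw [Complex.norm_def, hzm]
    refine Real.sqrt_le_sqrt ?_
    simp only [Complex.normSq_neg, Complex.normSq_mul, Complex.normSq_ofReal]
    nlinarith [mul_le_mul_of_nonneg_right hS_bound (Complex.normSq_nonneg (m2 z))]

end SpecGLM
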